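/- Let r > 0, let f be holomorphic on a neighborhood of the closed disc {z ∈ ℂ : |z| ≤ r}, and let g be continuous on the closed disc with |f(z)| > |g(z)| for |z| = r. Suppose α ∈ ℂ satisfies 0 < |α| < inf_{|z|=r} (|f(z)| − |g(z)|). If f has a zero in the open disc {|z| < r}, then there exists z' with |z'| < r such that f(z') − g(z') = α. -/

import Mathlib

/-!
Winding numbers around the origin are defined through continuous logarithms along a loop. If
`f - g` omitted the value `α` on the open disc, then `F = f - g - α` would vanish nowhere on the
closed disc (on the circle `‖F - f‖ ≤ ‖g‖ + ‖α‖ < ‖f‖`). A nonvanishing continuous function on a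
disc has a continuous logarithm, so `F` winds zero times along the circle. On the other hand `F`
stays closer to `f` than `f` is to `0` there, so `F` winds as often as `f`, and the holomorphic `f`
winds at least once around each of its zeros: factor out `(z - z₀) ^ m` at a zero and induct on
the number of zeros in the disc.
-/

open Metric Set Filter Topology Complex Function
open scoped Real

section AnalyticZeros

variable {𝕜 E : Type*} [NontriviallyNormedField 𝕜] [NormedAddCommGroup E] [NormedSpace 𝕜 E]
  {f : 𝕜 → E} {s K : Set 𝕜} {c : 𝕜}

theorem AnalyticOnNhd.dslope (hf : AnalyticOnNhd 𝕜 f s) : AnalyticOnNhd 𝕜 (dslope f c) s := by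
  intro z hz
  obtain rfl | hzc := eq_or_ne z c
  · obtain ⟨p, hp⟩ := hf z hz
    exact hp.has_fpower_series_dslope_fslope.analyticAt
  · have : AnalyticAt 𝕜 (fun w ↦ (w - c)⁻¹ • (f w - f c)) z :=
      ((analyticAt_id.sub analyticAt_const).inv (sub_ne_zero.2 hzc)).smul
        ((hf z hz).sub analyticAt_const)
    refine this.congr ?_
    filter_upwards [isOpen_ne.mem_nhds hzc] with w hw
    simp [dslope_of_ne _ hw, slope_def_module]

theorem AnalyticOnNhd.exists_eq_pow_smul (hf : AnalyticOnNhd 𝕜 f s) (hc : c ∈ s)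
    (hfc : f c = 0) (hf_ne : ¬∀ᶠ z in 𝓝 c, f z = 0) :
    ∃ n ≠ 0, ∃ φ : 𝕜 → E, AnalyticOnNhd 𝕜 φ s ∧ φ c ≠ 0 ∧ ∀ z, f z = (z - c) ^ n • φ z := by
  obtain ⟨p, hp⟩ := hf c hc
  have hp0 : p ≠ 0 := fun h ↦ hf_ne (hp.locally_zero_iff.2 h)
  have hφ : AnalyticOnNhd 𝕜 ((swap _root_.dslope c)^[p.order] f) s := by
    induction p.order with
    | zero => exact hf
    | succ n ih => rw [iterate_succ_apply']; exact ih.dslope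
  refine ⟨p.order, fun h ↦ hp.iterate_dslope_fslope_ne_zero hp0 ?_, _, hφ,
    hp.iterate_dslope_fslope_ne_zero hp0, hp.eq_pow_order_mul_iterate_dslope⟩
  rwa [h]

theorem AnalyticOnNhd.finite_setOf_eq_zero (hf : AnalyticOnNhd 𝕜 f K) (hK : IsCompact K)
    (hK' : IsPreconnected K) (h : ∃ z ∈ K, f z ≠ 0) : {z ∈ K | f z = 0}.Finite := by
  obtain ⟨z, hz, hfz⟩ := h
  rcases hf.eqOn_zero_or_eventually_ne_zero_of_preconnected hK' with h0 | hne
  · exact absurd (h0 hz) hfz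
  · convert hK.finite_sdiff_of_mem_codiscreteWithin hne using 1
    ext; simp

theorem sep_eq_zero_eq_sdiff_of_eq_pow_smul {φ : 𝕜 → E} {n : ℕ} (hn : n ≠ 0) (hφc : φ c ≠ 0)
    (hf : ∀ z, f z = (z - c) ^ n • φ z) :
    {z ∈ s | φ z = 0} = {z ∈ s | f z = 0} \ {c} := by
  ext z
  simp only [Set.mem_sdiff, mem_ofPred_eq, mem_singleton_iff, hf z, smul_eq_zero,
    pow_eq_zero_iff hn, sub_eq_zero]
  grind

end AnalyticZeros

def HasWindingNumber (γ : ℝ → ℂ) (k : ℤ) : Prop :=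
  ∃ ℓ : ℝ → ℂ, ContinuousOn ℓ (Icc 0 (2 * π)) ∧ (∀ θ ∈ Icc 0 (2 * π), exp (ℓ θ) = γ θ) ∧
    ℓ (2 * π) - ℓ 0 = 2 * π * I * k

namespace HasWindingNumber

variable {γ δ : ℝ → ℂ} {j k : ℤ}

theorem unique (hj : HasWindingNumber γ j) (hk : HasWindingNumber γ k) : j = k := by
  obtain ⟨ℓ, hℓ, hexp, hj⟩ := hj
  obtain ⟨ℓ', hℓ', hexp', hk⟩ := hk
  have h0 : (0 : ℝ) ∈ Icc 0 (2 * π) := left_mem_Icc.2 (by positivity)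
  have h2π : 2 * π ∈ Icc 0 (2 * π) := right_mem_Icc.2 (by positivity)
  have hshift : exp (ℓ 0 - ℓ' 0) = 1 := by
    rw [exp_sub, hexp 0 h0, hexp' 0 h0, div_self (hexp' 0 h0 ▸ exp_ne_zero _)]
  -- two lifts through the covering map `exp` that agree at one point agree everywhere
  have heq := isCoveringMap_exp.eqOn_of_comp_eqOn (g₂ := fun θ ↦ ℓ' θ + (ℓ 0 - ℓ' 0))
    isPreconnected_Icc hℓ (hℓ'.add continuousOn_const) (fun θ hθ ↦ by
      simp [exp_add, hshift, hexp θ hθ, hexp' θ hθ]) h0 (by ring)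
  have : (2 * π * I : ℂ) * j = 2 * π * I * k := by
    rw [← hj, ← hk]; linear_combination heq h2π
  exact_mod_cast mul_left_cancel₀ (by simp [Real.pi_ne_zero, I_ne_zero]) this

theorem mul (hj : HasWindingNumber γ j) (hk : HasWindingNumber δ k) :
    HasWindingNumber (γ * δ) (j + k) := by
  obtain ⟨ℓ, hℓ, hexp, hj⟩ := hj
  obtain ⟨ℓ', hℓ', hexp', hk⟩ := hk
  refine ⟨ℓ + ℓ', hℓ.add hℓ', fun θ hθ ↦ ?_, ?_⟩
  · simp [exp_add, hexp θ hθ, hexp' θ hθ]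
  · push_cast; simp only [Pi.add_apply]; linear_combination hj + hk

theorem pow (hk : HasWindingNumber γ k) (n : ℕ) : HasWindingNumber (γ ^ n) (n * k) := by
  obtain ⟨ℓ, hℓ, hexp, hk⟩ := hk
  refine ⟨fun θ ↦ n * ℓ θ, continuousOn_const.mul hℓ, fun θ hθ ↦ ?_, ?_⟩
  · simp [exp_nat_mul, hexp θ hθ]
  · push_cast; linear_combination (n : ℂ) * hk

theorem of_norm_sub_lt (hk : HasWindingNumber γ k) (hγ : γ (2 * π) = γ 0)
    (hδ : ContinuousOn δ (Icc 0 (2 * π))) (hδ' : δ (2 * π) = δ 0)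
    (hlt : ∀ θ ∈ Icc 0 (2 * π), ‖δ θ - γ θ‖ < ‖γ θ‖) : HasWindingNumber δ k := by
  obtain ⟨ℓ, hℓ, hexp, hk⟩ := hk
  have hγ0 : ∀ θ ∈ Icc 0 (2 * π), γ θ ≠ 0 := fun θ hθ ↦ hexp θ hθ ▸ exp_ne_zero _
  have hγc : ContinuousOn γ (Icc 0 (2 * π)) :=
    (continuous_exp.comp_continuousOn hℓ).congr fun θ hθ ↦ (hexp θ hθ).symm
  -- `δ / γ` stays in the disc `‖w - 1‖ < 1`, where the principal logarithm is continuous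
  have hslit : ∀ θ ∈ Icc 0 (2 * π), δ θ / γ θ ∈ slitPlane := fun θ hθ ↦ by
    have := mem_slitPlane_of_norm_lt_one (z := δ θ / γ θ - 1) (by
      rw [div_sub_one (hγ0 θ hθ), norm_div, div_lt_one ((norm_nonneg _).trans_lt (hlt θ hθ))]
      exact hlt θ hθ)
    rwa [add_sub_cancel] at this
  refine ⟨fun θ ↦ ℓ θ + log (δ θ / γ θ), hℓ.add fun θ hθ ↦ ?_, fun θ hθ ↦ ?_, ?_⟩
  · exact (continuousAt_clog (hslit θ hθ)).comp_continuousWithinAt (f := fun θ ↦ δ θ / γ θ)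
      ((hδ θ hθ).div (hγc θ hθ) (hγ0 θ hθ))
  · rw [exp_add, hexp θ hθ, exp_log (slitPlane_ne_zero (hslit θ hθ)), mul_div_cancel₀ _ (hγ0 θ hθ)]
  · simp only [hγ, hδ']; linear_combination hk

end HasWindingNumber

theorem hasWindingNumber_circleMap_zero {r : ℝ} (hr : r ≠ 0) :
    HasWindingNumber (circleMap 0 r) 1 := by
  refine ⟨fun θ ↦ log r + θ * I, by fun_prop, fun θ _ ↦ ?_, by push_cast; ring⟩
  rw [exp_add, exp_log (by exact_mod_cast hr), circleMap, zero_add]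

theorem hasWindingNumber_circleMap_sub {c a : ℂ} {r : ℝ} (ha : a ∈ ball c r) :
    HasWindingNumber (fun θ ↦ circleMap c r θ - a) 1 := by
  have hr : 0 < r := pos_of_mem_ball ha
  refine (hasWindingNumber_circleMap_zero hr.ne').of_norm_sub_lt (periodic_circleMap 0 r).eq
    (by fun_prop) (by simp only [(periodic_circleMap c r).eq]) fun θ _ ↦ ?_
  rw [← circleMap_sub_center c, sub_sub_sub_cancel_left, circleMap_sub_center,
    norm_circleMap_zero, abs_of_pos hr, norm_sub_rev, ← dist_eq_norm]
  exact ha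

theorem Convex.exists_continuousOn_exp_eq {S : Set ℂ} (hS : Convex ℝ S) {ψ : ℂ → ℂ}
    (hψ : ContinuousOn ψ S) (h0 : ∀ z ∈ S, ψ z ≠ 0) :
    ∃ L : ℂ → ℂ, ContinuousOn L S ∧ ∀ z ∈ S, exp (L z) = ψ z := by
  classical
  obtain rfl | ⟨z₀, hz₀⟩ := S.eq_empty_or_nonempty
  · exact ⟨0, continuousOn_empty _, fun _ h ↦ h.elim⟩
  have := hS.contractibleSpace ⟨z₀, hz₀⟩
  have := hS.locallyPathConnectedSpace
  let f : C(S, {z : ℂ // z ≠ 0}) := ⟨fun z ↦ ⟨ψ z, h0 z z.2⟩, hψ.domRestrict.subtype_mk _⟩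
  -- `S` is simply connected, so `ψ` lifts through the covering map `exp : ℂ → ℂ \ {0}`
  obtain ⟨F, -, hF⟩ := (isCoveringMap_exp.existsUnique_continuousMap_lifts f ⟨z₀, hz₀⟩
    (log (ψ z₀)) (Subtype.ext (exp_log (h0 z₀ hz₀)))).exists
  refine ⟨fun z ↦ if hz : z ∈ S then F ⟨z, hz⟩ else 0, ?_, fun z hz ↦ ?_⟩
  · rw [continuousOn_iff_continuous_domRestrict]
    convert F.continuous
    ext z
    simp [z.2]
  · simp only [dif_pos hz]
    exact congr_arg Subtype.val (congr_fun hF ⟨z, hz⟩)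

theorem hasWindingNumber_zero_of_continuousOn_closedBall {c : ℂ} {r : ℝ} (hr : 0 ≤ r)
    {ψ : ℂ → ℂ} (hψ : ContinuousOn ψ (closedBall c r)) (h0 : ∀ z ∈ closedBall c r, ψ z ≠ 0) :
    HasWindingNumber (ψ ∘ circleMap c r) 0 := by
  obtain ⟨L, hL, hexp⟩ := (convex_closedBall c r).exists_continuousOn_exp_eq hψ h0
  refine ⟨L ∘ circleMap c r, hL.comp (continuous_circleMap c r).continuousOn
    fun θ _ ↦ circleMap_mem_closedBall c hr θ, fun θ _ ↦ hexp _ (circleMap_mem_closedBall c hr θ),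
    ?_⟩
  simp [(periodic_circleMap c r).eq]

theorem AnalyticOnNhd.exists_hasWindingNumber_ge_ncard {c : ℂ} {r : ℝ} (hr : 0 ≤ r) {ψ : ℂ → ℂ}
    (hψ : AnalyticOnNhd ℂ ψ (closedBall c r)) (hsph : ∀ z ∈ sphere c r, ψ z ≠ 0) :
    ∃ k : ℤ, HasWindingNumber (ψ ∘ circleMap c r) k ∧
      ({z ∈ closedBall c r | ψ z = 0}.ncard : ℤ) ≤ k := by
  have hK := (convex_closedBall c r).isPreconnected
  have hpt := circleMap_mem_sphere c hr 0
  obtain ⟨n, hn⟩ : ∃ n, {z ∈ closedBall c r | ψ z = 0}.ncard = n := ⟨_, rfl⟩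
  induction n generalizing ψ with
  | zero =>
    have hfin := hψ.finite_setOf_eq_zero (isCompact_closedBall c r) hK
      ⟨_, sphere_subset_closedBall hpt, hsph _ hpt⟩
    have hempty := (ncard_eq_zero hfin).1 hn
    refine ⟨0, hasWindingNumber_zero_of_continuousOn_closedBall hr hψ.continuousOn
      fun z hz h0 ↦ hempty.subset ⟨hz, h0⟩, by rw [hn]; rfl⟩
  | succ n ih =>
    obtain ⟨z₀, hz₀, hψz₀⟩ := nonempty_of_ncard_ne_zero (hn.trans_ne n.succ_ne_zero)
    have hz₀_ball : z₀ ∈ ball c r := by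
      rw [← closedBall_sdiff_sphere]
      exact ⟨hz₀, fun h ↦ hsph z₀ h hψz₀⟩
    have hne : ¬∀ᶠ z in 𝓝 z₀, ψ z = 0 := fun h ↦
      hsph _ hpt (hψ.eqOn_zero_of_preconnected_of_eventuallyEq_zero hK hz₀ h
        (sphere_subset_closedBall hpt))
    obtain ⟨m, hm, φ, hφ, hφz₀, hfac⟩ := hψ.exists_eq_pow_smul hz₀ hψz₀ hne
    have hφn : {z ∈ closedBall c r | φ z = 0}.ncard = n := by
      rw [sep_eq_zero_eq_sdiff_of_eq_pow_smul hm hφz₀ hfac, ncard_sdiff_singleton_of_mem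
        (show z₀ ∈ {z ∈ closedBall c r | ψ z = 0} from ⟨hz₀, hψz₀⟩), hn, Nat.add_sub_cancel]
    obtain ⟨k, hk, hkn⟩ := ih hφ (fun z hz h0 ↦ hsph z hz (by simp [hfac z, h0])) hφn
    refine ⟨m + k, ?_, ?_⟩
    · convert ((hasWindingNumber_circleMap_sub hz₀_ball).pow m).mul hk using 1
      · ext θ; simp [hfac]
      · ring
    · rw [hφn] at hkn
      rw [hn]
      omega

theorem AnalyticOnNhd.exists_hasWindingNumber_pos {c z₀ : ℂ} {r : ℝ} {ψ : ℂ → ℂ}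
    (hψ : AnalyticOnNhd ℂ ψ (closedBall c r)) (hsph : ∀ z ∈ sphere c r, ψ z ≠ 0)
    (hz₀ : z₀ ∈ closedBall c r) (hψz₀ : ψ z₀ = 0) :
    ∃ k : ℤ, HasWindingNumber (ψ ∘ circleMap c r) k ∧ 0 < k := by
  have hr : 0 ≤ r := nonempty_closedBall.1 ⟨z₀, hz₀⟩
  have hpt := circleMap_mem_sphere c hr 0
  have hfin := hψ.finite_setOf_eq_zero (isCompact_closedBall c r)
    (convex_closedBall c r).isPreconnected ⟨_, sphere_subset_closedBall hpt, hsph _ hpt⟩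
  obtain ⟨k, hk, hle⟩ := hψ.exists_hasWindingNumber_ge_ncard hr hsph
  exact ⟨k, hk, lt_of_lt_of_le (by exact_mod_cast (ncard_pos hfin).2 ⟨z₀, hz₀, hψz₀⟩) hle⟩

theorem rouche_type_alpha_general
    (r : ℝ) (f g : ℂ → ℂ)
    (U : Set ℂ) (hU : IsOpen U) (hUr : closedBall (0 : ℂ) r ⊆ U)
    (hf : DifferentiableOn ℂ f U)
    (hg : ContinuousOn g (closedBall (0 : ℂ) r))
    (α : ℂ)
    (hαinf : ‖α‖ <
      sInf ((fun z => ‖f z‖ - ‖g z‖) '' sphere (0 : ℂ) r))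
    (z₀ : ℂ) (hz₀ : ‖z₀‖ < r) (hfz₀ : f z₀ = 0) :
    ∃ z' : ℂ, ‖z'‖ < r ∧ f z' - g z' = α := by
  have hfc : ContinuousOn f (closedBall 0 r) := hf.continuousOn.mono hUr
  have hperturb : ∀ z ∈ sphere (0 : ℂ) r, ‖(f z - g z - α) - f z‖ < ‖f z‖ := fun z hz ↦ by
    have := hαinf.trans_le <| csInf_le ((isCompact_sphere 0 r).bddBelow_image <|
      (hfc.mono sphere_subset_closedBall).norm.sub (hg.mono sphere_subset_closedBall).norm)
      ⟨z, hz, rfl⟩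
    rw [show f z - g z - α - f z = -(g z + α) by ring, norm_neg]
    linarith [norm_add_le (g z) α]
  obtain ⟨k, hk, hkpos⟩ := ((hf.analyticOnNhd hU).mono hUr).exists_hasWindingNumber_pos
    (fun z hz ↦ norm_pos_iff.1 ((norm_nonneg _).trans_lt (hperturb z hz)))
    (mem_closedBall_zero_iff.2 hz₀.le) hfz₀
  by_contra! hcon
  have hF : ContinuousOn (fun z ↦ f z - g z - α) (closedBall 0 r) :=
    (hfc.sub hg).sub continuousOn_const
  have hF0 : ∀ z ∈ closedBall (0 : ℂ) r, f z - g z - α ≠ 0 := by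
    intro z hz h0
    rcases (mem_closedBall_zero_iff.1 hz).lt_or_eq with hlt | heq
    · exact hcon z hlt (sub_eq_zero.1 h0)
    · simpa [h0] using hperturb z (mem_sphere_zero_iff_norm.2 heq)
  have hr : 0 ≤ r := (norm_nonneg z₀).trans hz₀.le
  have hwind := hk.of_norm_sub_lt (by simp [(periodic_circleMap 0 r).eq])
    (hF.comp (continuous_circleMap 0 r).continuousOn fun θ _ ↦ circleMap_mem_closedBall 0 hr θ)
    (by simp [(periodic_circleMap 0 r).eq]) fun θ _ ↦ hperturb _ (circleMap_mem_sphere 0 hr θ)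
  exact hkpos.ne' (hwind.unique (hasWindingNumber_zero_of_continuousOn_closedBall hr hF hF0))

/-- α-version of the Rouché-type theorem: with `|f| > |g|` on the circle `|z| = r` and
`0 < |α| < inf_{|z|=r}(|f(z)| - |g(z)|)`, if `f` has a zero in the open disc then
`f - g` takes the value `α` in the open disc. -/
theorem rouche_type_alpha
    (r : ℝ) (hr : 0 < r) (f g : ℂ → ℂ)
    (U : Set ℂ) (hU : IsOpen U) (hUr : closedBall (0 : ℂ) r ⊆ U)
    (hf : DifferentiableOn ℂ f U)
    (hg : ContinuousOn g (closedBall (0 : ℂ) r))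
    (hfg : ∀ z : ℂ, ‖z‖ = r → ‖g z‖ < ‖f z‖)
    (α : ℂ) (hα0 : 0 < ‖α‖)
    (hαinf : ‖α‖ <
      sInf ((fun z => ‖f z‖ - ‖g z‖) '' sphere (0 : ℂ) r))
    (z₀ : ℂ) (hz₀ : ‖z₀‖ < r) (hfz₀ : f z₀ = 0) :
    ∃ z' : ℂ, ‖z'‖ < r ∧ f z' - g z' = α :=
  rouche_type_alpha_general r f g U hU hUr hf hg α hαinf z₀ hz₀ hfz₀
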